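/- arXiv:1312.4245 — 11 statements merged into one kernel-verified Lean document; each statement's English description precedes it below -/
import Mathlib

section
/- Let C be a category with all finite limits and colimits and let W be a class of morphisms of C containing all isomorphisms, closed under composition, and satisfying the two-out-of-three property. If the pair (W, W.rlp) is a weak factorization system, then the triple with weak equivalences W, cofibrations all morphisms of C, and fibrations W.rlp is a model structure on C; in particular W ∩ W.rlp is exactly the class of isomorphisms and the pair (all morphisms, isomorphisms) is a weak factorization system. -/
open CategoryTheory CategoryTheory.Limits

universe v u

variable {C : Type u} [Category.{v} C]

/-- The left lifting class of a class of morphisms. -/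
def MorphismPropertyLLP (S : MorphismProperty C) : MorphismProperty C :=
  fun _ _ f => ∀ ⦃X Y : C⦄ (g : X ⟶ Y), S g → HasLiftingProperty f g

/-- The right lifting class of a class of morphisms. -/
def MorphismPropertyRLP (S : MorphismProperty C) : MorphismProperty C :=
  fun _ _ g => ∀ ⦃A B : C⦄ (f : A ⟶ B), S f → HasLiftingProperty f g

/-- `(L, R)` is a weak factorization system. -/
structure IsWFS (L R : MorphismProperty C) : Prop where
  llp_eq : L = MorphismPropertyLLP R
  rlp_eq : R = MorphismPropertyRLP L
  factor : ∀ ⦃X Y : C⦄ (f : X ⟶ Y),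
    ∃ (Z : C) (l : X ⟶ Z) (r : Z ⟶ Y), L l ∧ R r ∧ l ≫ r = f

/-- The two-out-of-three property for a class of morphisms. -/
def TwoOfThree (W : MorphismProperty C) : Prop :=
  ∀ ⦃X Y Z : C⦄ (f : X ⟶ Y) (g : Y ⟶ Z),
    (W f → W g → W (f ≫ g)) ∧ (W f → W (f ≫ g) → W g) ∧ (W g → W (f ≫ g) → W f)

/-- `(W, Cof, Fib)` is a model structure. -/
structure IsModelStructure (W Cof Fib : MorphismProperty C) : Prop where
  twoOfThree : TwoOfThree W
  wfs₁ : IsWFS Cof (fun _ _ f => Fib f ∧ W f)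
  wfs₂ : IsWFS (fun _ _ f => Cof f ∧ W f) Fib

lemma isIso_of_selfLift {C : Type u} [Category.{v} C] {X Y : C} (f : X ⟶ Y)
    (h : HasLiftingProperty f f) : IsIso f := by
  have sq : CommSq (𝟙 X) f f (𝟙 Y) := CommSq.mk (by simp)
  exact ⟨sq.lift, sq.fac_left, sq.fac_right⟩

/-- If `W` contains all isomorphisms, is closed under composition, satisfies
two-out-of-three, and `(W, W.rlp)` is a weak factorization system, then
(W, all morphisms, W.rlp) is a model structure; in particular `W ∩ W.rlp` is the
class of isomorphisms and (all morphisms, isomorphisms) is a weak factorization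
system. -/
theorem modelStructure_of_wfs_with_rlp
    {C : Type u} [Category.{v} C] [HasFiniteLimits C] [HasFiniteColimits C]
    (W : MorphismProperty C)
    (hiso : ∀ ⦃X Y : C⦄ (f : X ⟶ Y), IsIso f → W f)
    (hcomp : ∀ ⦃X Y Z : C⦄ (f : X ⟶ Y) (g : Y ⟶ Z), W f → W g → W (f ≫ g))
    (h23 : TwoOfThree W)
    (hwfs : IsWFS W (MorphismPropertyRLP W)) :
    IsModelStructure W (fun _ _ _ => True) (MorphismPropertyRLP W) ∧
    (fun _ _ f => W f ∧ MorphismPropertyRLP W f : MorphismProperty C) =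
      MorphismProperty.isomorphisms C ∧
    IsWFS (fun _ _ _ => True : MorphismProperty C) (MorphismProperty.isomorphisms C) := by
  -- isos have RLP against everything
  have isoLift : ∀ ⦃X Y : C⦄ (g : X ⟶ Y), IsIso g →
      ∀ ⦃A B : C⦄ (f : A ⟶ B), HasLiftingProperty f g := by
    intro X Y g hg A B f
    infer_instance
  -- isos have LLP against everything
  have isoLift' : ∀ ⦃X Y : C⦄ (f : X ⟶ Y), IsIso f →
      ∀ ⦃A B : C⦄ (g : A ⟶ B), HasLiftingProperty f g := by
    intro X Y f hf A B g
    infer_instance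
  have key : (fun _ _ f => W f ∧ MorphismPropertyRLP W f : MorphismProperty C) =
      MorphismProperty.isomorphisms C := by
    funext X Y f
    ext
    constructor
    · rintro ⟨hWf, hrlp⟩
      exact isIso_of_selfLift f (hrlp f hWf)
    · intro hf
      exact ⟨hiso f hf, fun A B g _ => isoLift f hf g⟩
  refine ⟨⟨h23, ?_, ?_⟩, key, ?_⟩
  · -- (all, RLP W ∩ W) is a WFS
    constructor
    · funext X Y f
      ext
      refine ⟨fun _ A B g hg => ?_, fun _ => trivial⟩
      have : MorphismProperty.isomorphisms C g := by
        rw [← key]; exact ⟨hg.2, hg.1⟩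
      exact isoLift g this f
    · funext X Y g
      ext
      constructor
      · rintro ⟨hrlp, hW⟩ A B f _
        have : MorphismProperty.isomorphisms C g := by
          rw [← key]; exact ⟨hW, hrlp⟩
        exact isoLift g this f
      · intro h
        have hg : IsIso g := isIso_of_selfLift g (h g trivial)
        exact ⟨fun A B f _ => isoLift g hg f, hiso g hg⟩
    · intro X Y f
      exact ⟨Y, f, 𝟙 Y, trivial,
        ⟨fun A B u _ => isoLift (𝟙 Y) inferInstance u, hiso _ inferInstance⟩, by simp⟩
  · -- (all ∩ W, RLP W) is a WFS
    constructor
    · funext X Y f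
      ext
      have := congrFun (congrFun (congrFun hwfs.llp_eq X) Y) f
      constructor
      · rintro ⟨-, hW⟩
        exact this ▸ hW
      · intro h
        exact ⟨trivial, this ▸ h⟩
    · funext X Y g
      ext
      exact ⟨fun h A B f hf => h f hf.2, fun h A B f hf => h f ⟨trivial, hf⟩⟩
    · intro X Y f
      obtain ⟨Z, l, r, hl, hr, hfac⟩ := hwfs.factor f
      exact ⟨Z, l, r, ⟨trivial, hl⟩, hr, hfac⟩
  · -- (all, isos) is a WFS
    constructor
    · funext X Y f
      ext
      exact ⟨fun _ A B g hg => isoLift g hg f, fun _ => trivial⟩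
    · funext X Y g
      ext
      constructor
      · intro hg A B f _
        exact isoLift g hg f
      · intro h
        exact isIso_of_selfLift g (h g trivial)
    · intro X Y f
      exact ⟨Y, f, 𝟙 Y, trivial, (MorphismProperty.isomorphisms C).id_mem Y, by simp⟩
end

section
/- Let C be a category with all finite limits and colimits and let F : C ⥤ E' be a functor, where E' is the linear order with three elements 0 < 1 < 2 viewed as a category (e.g. Fin 3 with its order). Define Cof = {f : A ⟶ B | F.obj B ≠ 0} ∪ {isomorphisms}, Fib = {f : A ⟶ B | F.obj A ≠ 2} ∪ {isomorphisms}, and W = {f : A ⟶ B | (F.obj A = 0 ∧ F.obj B = 0) ∨ (F.obj A = 2 ∧ F.obj B = 2)} ∪ {isomorphisms}. Then (W, Cof, Fib) is a model structure on C. -/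
open CategoryTheory CategoryTheory.Limits

universe v u

section Aux

variable {C : Type u} [Category.{v} C] (F : C ⥤ Fin 3)

lemma dc_le {A B : C} (f : A ⟶ B) : F.obj A ≤ F.obj B := leOfHom (F.map f)

lemma dc_iso_eq {A B : C} (f : A ⟶ B) (h : IsIso f) : F.obj A = F.obj B := by
  haveI := h
  exact le_antisymm (leOfHom (F.map f)) (leOfHom (F.map (inv f)))

lemma dc_self {A B : C} (f : A ⟶ B) (h : HasLiftingProperty f f) : IsIso f := by
  have sq : CommSq (𝟙 A) f f (𝟙 B) := ⟨by simp⟩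
  exact ⟨sq.lift, sq.fac_left, sq.fac_right⟩

lemma fin3_le_zero {a b : Fin 3} (h : a ≤ b) (hb : b = 0) : a = 0 := by
  have := a.isLt; simp only [Fin.le_def, Fin.ext_iff, Fin.val_zero] at *; omega

lemma fin3_two_le {a b : Fin 3} (h : a ≤ b) (ha : a = 2) : b = 2 := by
  have := b.isLt; simp only [Fin.le_def, Fin.ext_iff] at *; omega

lemma fin3_zero_ne_two : (0 : Fin 3) ≠ 2 := by decide

lemma fin3_two_ne_zero : (2 : Fin 3) ≠ 0 := by decide

/-- vacuous lifting: left map has target not in 0, right map lands in 0. -/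
lemma dc_vac₁ {A B X Y : C} (f : A ⟶ B) (g : X ⟶ Y)
    (hB : F.obj B ≠ 0) (hY : F.obj Y = 0) : HasLiftingProperty f g :=
  ⟨fun {u v} _ => absurd (fin3_le_zero (dc_le F v) hY) hB⟩

/-- vacuous lifting: left map has source in 2, right map has source not in 2. -/
lemma dc_vac₂ {A B X Y : C} (f : A ⟶ B) (g : X ⟶ Y)
    (hA : F.obj A = 2) (hX : F.obj X ≠ 2) : HasLiftingProperty f g :=
  ⟨fun {u v} _ => absurd (fin3_two_le (dc_le F u) hA) hX⟩

end Aux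

/-- Given a "double cut" `F : C ⥤ Fin 3` (the total order `0 < 1 < 2`), the
cofibrations `{f : A ⟶ B | F.obj B ≠ 0} ∪ isos`, the fibrations
`{f : A ⟶ B | F.obj A ≠ 2} ∪ isos`, and the weak equivalences
`{f : A ⟶ B | (F.obj A = 0 ∧ F.obj B = 0) ∨ (F.obj A = 2 ∧ F.obj B = 2)} ∪ isos`
form a model structure on a finitely bicomplete category `C`. -/
theorem modelStructure_of_doubleCut
    {C : Type u} [Category.{v} C] [HasFiniteLimits C] [HasFiniteColimits C]
    (F : C ⥤ Fin 3) :
    IsModelStructure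
      (fun A B f => ((F.obj A = 0 ∧ F.obj B = 0) ∨ (F.obj A = 2 ∧ F.obj B = 2)) ∨ IsIso f :
        MorphismProperty C)
      (fun A B f => F.obj B ≠ 0 ∨ IsIso f)
      (fun A B f => F.obj A ≠ 2 ∨ IsIso f) := by
  constructor
  · -- two out of three
    intro X Y Z f g
    refine ⟨?_, ?_, ?_⟩
    · rintro (hf | hf) (hg | hg)
      · left
        rcases hf with ⟨ha, hb⟩ | ⟨ha, hb⟩ <;> rcases hg with ⟨hc, hd⟩ | ⟨hc, hd⟩
        · exact Or.inl ⟨ha, hd⟩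
        · rw [hb] at hc; exact absurd hc fin3_zero_ne_two
        · rw [hb] at hc; exact absurd hc fin3_two_ne_zero
        · exact Or.inr ⟨ha, hd⟩
      · have e := dc_iso_eq F g hg
        rcases hf with ⟨ha, hb⟩ | ⟨ha, hb⟩
        · exact Or.inl (Or.inl ⟨ha, e ▸ hb⟩)
        · exact Or.inl (Or.inr ⟨ha, e ▸ hb⟩)
      · have e := dc_iso_eq F f hf
        rcases hg with ⟨hc, hd⟩ | ⟨hc, hd⟩
        · exact Or.inl (Or.inl ⟨e ▸ hc, hd⟩)
        · exact Or.inl (Or.inr ⟨e ▸ hc, hd⟩)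
      · haveI := hf; haveI := hg; exact Or.inr inferInstance
    · rintro (hf | hf) (hfg | hfg)
      · left
        rcases hfg with ⟨ha, hb⟩ | ⟨ha, hb⟩
        · exact Or.inl ⟨fin3_le_zero (dc_le F g) hb, hb⟩
        · exact Or.inr ⟨fin3_two_le (dc_le F f) ha, hb⟩
      · have e := dc_iso_eq F (f ≫ g) hfg
        rcases hf with ⟨ha, hb⟩ | ⟨ha, hb⟩
        · exact Or.inl (Or.inl ⟨hb, e ▸ ha⟩)
        · exact Or.inl (Or.inr ⟨hb, e ▸ ha⟩)
      · left
        rcases hfg with ⟨ha, hb⟩ | ⟨ha, hb⟩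
        · exact Or.inl ⟨fin3_le_zero (dc_le F g) hb, hb⟩
        · exact Or.inr ⟨fin3_two_le (dc_le F f) ha, hb⟩
      · haveI := hf; haveI := hfg
        exact Or.inr (IsIso.of_isIso_comp_left f g)
    · rintro (hg | hg) (hfg | hfg)
      · left
        rcases hfg with ⟨ha, hb⟩ | ⟨ha, hb⟩
        · exact Or.inl ⟨ha, fin3_le_zero (dc_le F g) hb⟩
        · exact Or.inr ⟨ha, fin3_two_le (dc_le F f) ha⟩
      · have e := dc_iso_eq F (f ≫ g) hfg
        rcases hg with ⟨ha, hb⟩ | ⟨ha, hb⟩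
        · exact Or.inl (Or.inl ⟨e ▸ hb, ha⟩)
        · exact Or.inl (Or.inr ⟨e ▸ hb, ha⟩)
      · left
        rcases hfg with ⟨ha, hb⟩ | ⟨ha, hb⟩
        · exact Or.inl ⟨ha, fin3_le_zero (dc_le F g) hb⟩
        · exact Or.inr ⟨ha, fin3_two_le (dc_le F f) ha⟩
      · haveI := hg; haveI := hfg
        exact Or.inr (IsIso.of_isIso_comp_right f g)
  · -- WFS (Cof, Fib ∩ W)
    constructor
    · funext A B f
      apply propext
      constructor
      · intro h X Y g hg
        obtain ⟨hfib, hw⟩ := hg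
        rcases hw with (⟨h0a, h0b⟩ | ⟨h2a, h2b⟩) | hgi
        · rcases h with hB | hfi
          · exact dc_vac₁ F f g hB h0b
          · haveI := hfi; infer_instance
        · rcases hfib with hX | hgi
          · exact absurd h2a hX
          · haveI := hgi; infer_instance
        · haveI := hgi; infer_instance
      · intro h
        by_cases hB : F.obj B = 0
        · have hA : F.obj A = 0 := fin3_le_zero (dc_le F f) hB
          refine Or.inr (dc_self f (h f ⟨Or.inl ?_, Or.inl (Or.inl ⟨hA, hB⟩)⟩))
          rw [hA]; exact fin3_zero_ne_two
        · exact Or.inl hB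
    · funext X Y g
      apply propext
      constructor
      · rintro ⟨hfib, hw⟩ A B f hf
        rcases hw with (⟨h0a, h0b⟩ | ⟨h2a, h2b⟩) | hgi
        · rcases hf with hB | hfi
          · exact dc_vac₁ F f g hB h0b
          · haveI := hfi; infer_instance
        · rcases hfib with hX | hgi
          · exact absurd h2a hX
          · haveI := hgi; infer_instance
        · haveI := hgi; infer_instance
      · intro h
        by_cases hX : F.obj X = 0
        · by_cases hY : F.obj Y = 0
          · exact ⟨Or.inl (by rw [hX]; exact fin3_zero_ne_two), Or.inl (Or.inl ⟨hX, hY⟩)⟩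
          · have hiso := dc_self g (h g (Or.inl hY))
            exact ⟨Or.inr hiso, Or.inr hiso⟩
        · have hY : F.obj Y ≠ 0 := fun h0 => hX (fin3_le_zero (dc_le F g) h0)
          have hiso := dc_self g (h g (Or.inl hY))
          exact ⟨Or.inr hiso, Or.inr hiso⟩
    · intro X Y f
      by_cases hY : F.obj Y = 0
      · have hX : F.obj X = 0 := fin3_le_zero (dc_le F f) hY
        exact ⟨X, 𝟙 X, f, Or.inr inferInstance,
          ⟨Or.inl (by rw [hX]; exact fin3_zero_ne_two), Or.inl (Or.inl ⟨hX, hY⟩)⟩,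
          Category.id_comp f⟩
      · exact ⟨Y, f, 𝟙 Y, Or.inl hY,
          ⟨Or.inr inferInstance, Or.inr inferInstance⟩, Category.comp_id f⟩
  · -- WFS (Cof ∩ W, Fib)
    constructor
    · funext A B f
      apply propext
      constructor
      · rintro ⟨hcof, hw⟩ X Y g hg
        rcases hg with hX | hgi
        · rcases hw with (⟨h0a, h0b⟩ | ⟨h2a, h2b⟩) | hfi
          · rcases hcof with hB | hfi
            · exact absurd h0b hB
            · haveI := hfi; infer_instance
          · exact dc_vac₂ F f g h2a hX
          · haveI := hfi; infer_instance
        · haveI := hgi; infer_instance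
      · intro h
        by_cases hA : F.obj A = 2
        · have hB : F.obj B = 2 := fin3_two_le (dc_le F f) hA
          exact ⟨Or.inl (by rw [hB]; exact fin3_two_ne_zero), Or.inl (Or.inr ⟨hA, hB⟩)⟩
        · have hiso := dc_self f (h f (Or.inl hA))
          exact ⟨Or.inr hiso, Or.inr hiso⟩
    · funext X Y g
      apply propext
      constructor
      · rintro hg A B f ⟨hcof, hw⟩
        rcases hg with hX | hgi
        · rcases hw with (⟨h0a, h0b⟩ | ⟨h2a, h2b⟩) | hfi
          · rcases hcof with hB | hfi
            · exact absurd h0b hB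
            · haveI := hfi; infer_instance
          · exact dc_vac₂ F f g h2a hX
          · haveI := hfi; infer_instance
        · haveI := hgi; infer_instance
      · intro h
        by_cases hX : F.obj X = 2
        · have hY : F.obj Y = 2 := fin3_two_le (dc_le F g) hX
          refine Or.inr (dc_self g (h g ⟨Or.inl ?_, Or.inl (Or.inr ⟨hX, hY⟩)⟩))
          rw [hY]; exact fin3_two_ne_zero
        · exact Or.inl hX
    · intro X Y f
      by_cases hX : F.obj X = 2
      · have hY : F.obj Y = 2 := fin3_two_le (dc_le F f) hX
        exact ⟨Y, f, 𝟙 Y,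
          ⟨Or.inl (by rw [hY]; exact fin3_two_ne_zero), Or.inl (Or.inr ⟨hX, hY⟩)⟩,
          Or.inr inferInstance, Category.comp_id f⟩
      · exact ⟨X, 𝟙 X, f, ⟨Or.inr inferInstance, Or.inr inferInstance⟩,
          Or.inl hX, Category.id_comp f⟩
end

section
/- Let C be a category with all finite limits and colimits and let F : C ⥤ E be a cut, where E is the preorder with two objects 0 < 1 viewed as a category (e.g. Fin 2 with its order). Define W = {f : A ⟶ B | F.obj A = F.obj B}, Cof = {f : A ⟶ B | F.obj B = 1} ∪ {isomorphisms}, and Fib = {f : A ⟶ B | F.obj A = 0} ∪ {isomorphisms}. Then (W, Cof, Fib) is a model structure on C (the balanced model structure associated to F), and it is both left proper and right proper: the pushout of a morphism of W along a morphism of Cof lies in W, and the pullback of a morphism of W along a morphism of Fib lies in W. -/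
open CategoryTheory CategoryTheory.Limits

universe v u

/-!
A morphism `A ⟶ B` forces `F A ≤ F B`, so a square from `f : A ⟶ B` to `g : X ⟶ Y` exists
only if `F A ≤ F X` and `F B ≤ F Y`. Away from the isomorphisms, cofibrations end at `1` and
trivial fibrations end at `0`, while trivial cofibrations start at `1` and fibrations start at
`0`; so every required lifting problem either involves an isomorphism or has no instance. Each
pair also covers all morphisms, so factorizations are trivial, and a morphism lifting against
itself is an isomorphism, which identifies each class with the lifting class of the other.
Properness: the base change of an isomorphism is an isomorphism.
-/

section

variable {C : Type u} [Category.{v} C]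

lemma isIso_of_hasLiftingProperty_self {X Y : C} (f : X ⟶ Y) [HasLiftingProperty f f] :
    IsIso f :=
  let sq : CommSq (𝟙 X) f f (𝟙 Y) := ⟨by simp⟩
  ⟨sq.lift, sq.fac_left, sq.fac_right⟩

lemma CategoryTheory.HasLiftingProperty.of_isEmpty_hom_left {A B X Y : C}
    (f : A ⟶ B) (g : X ⟶ Y) [IsEmpty (A ⟶ X)] : HasLiftingProperty f g :=
  ⟨fun {u _} _ => (IsEmpty.false u).elim⟩

lemma CategoryTheory.HasLiftingProperty.of_isEmpty_hom_right {A B X Y : C}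
    (f : A ⟶ B) (g : X ⟶ Y) [IsEmpty (B ⟶ Y)] : HasLiftingProperty f g :=
  ⟨fun {_ v} _ => (IsEmpty.false v).elim⟩

lemma IsWFS.of_hasLiftingProperty_of_forall_or {L R : MorphismProperty C}
    (hL : MorphismProperty.isomorphisms C ≤ L) (hR : MorphismProperty.isomorphisms C ≤ R)
    (lift : ∀ ⦃A B X Y : C⦄ (f : A ⟶ B) (g : X ⟶ Y), L f → R g → HasLiftingProperty f g)
    (cover : ∀ ⦃X Y : C⦄ (f : X ⟶ Y), L f ∨ R f) : IsWFS L R where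
  llp_eq := by
    ext A B f
    refine ⟨fun hf X Y g hg => lift f g hf hg, fun hf => (cover f).elim id fun hRf => ?_⟩
    have := hf f hRf
    exact hL f (isIso_of_hasLiftingProperty_self f)
  rlp_eq := by
    ext X Y g
    refine ⟨fun hg A B f hf => lift f g hf hg, fun hg => (cover g).elim (fun hLg => ?_) id⟩
    have := hg g hLg
    exact hR g (isIso_of_hasLiftingProperty_self g)
  factor X Y f := (cover f).elim
    (fun hLf => ⟨Y, f, 𝟙 Y, hLf, hR _ (.infer_property _), Category.comp_id f⟩)
    (fun hRf => ⟨X, 𝟙 X, f, hL _ (.infer_property _), hRf, Category.id_comp f⟩)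

lemma twoOfThree_obj_eq {α : Sort*} (φ : C → α) :
    TwoOfThree (fun A B (_ : A ⟶ B) => φ A = φ B) :=
  fun _ _ _ _ _ => ⟨Eq.trans, fun h₁ h₂ => h₁.symm.trans h₂, fun h₂ h₁₂ => h₁₂.trans h₂.symm⟩

lemma isEmpty_hom_of_obj_lt {α : Type*} [Preorder α] (F : C ⥤ α) {X Y : C}
    (h : F.obj Y < F.obj X) : IsEmpty (X ⟶ Y) :=
  ⟨fun f => (leOfHom (F.map f)).not_gt h⟩

end

namespace BalancedModelStructure

variable {C : Type u} [Category.{v} C] (F : C ⥤ Fin 2)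

def weq : MorphismProperty C := fun A B _ => F.obj A = F.obj B

def cof : MorphismProperty C := fun _ B f => F.obj B = 1 ∨ IsIso f

def fib : MorphismProperty C := fun A _ f => F.obj A = 0 ∨ IsIso f

variable {F}

lemma obj_eq_of_isIso {X Y : C} (f : X ⟶ Y) [IsIso f] : F.obj X = F.obj Y :=
  le_antisymm (leOfHom (F.map f)) (leOfHom (F.map (inv f)))

lemma obj_eq_zero_of_hom {X Y : C} (f : X ⟶ Y) (hY : F.obj Y = 0) : F.obj X = 0 := by
  have := leOfHom (F.map f); omega

lemma obj_eq_one_of_hom {X Y : C} (f : X ⟶ Y) (hX : F.obj X = 1) : F.obj Y = 1 := by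
  have := leOfHom (F.map f); omega

lemma isWFS_cof_fib_inf_weq : IsWFS (cof F) (fun _ _ f => fib F f ∧ weq F f) := by
  refine .of_hasLiftingProperty_of_forall_or (fun _ _ f hf => ?_) (fun _ _ g hg => ?_)
    (fun A B X Y f g hf hg => ?_) (fun A B f => ?_)
  · exact Or.inr hf
  · rw [MorphismProperty.isomorphisms.iff] at hg
    exact ⟨Or.inr hg, obj_eq_of_isIso g⟩
  · obtain ⟨hX | hg, hXY⟩ := hg
    · obtain hB | hf := hf
      · have hY : F.obj Y = 0 := (Eq.symm hXY).trans hX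
        have : IsEmpty (B ⟶ Y) := isEmpty_hom_of_obj_lt F (by omega)
        exact .of_isEmpty_hom_right f g
      · infer_instance
    · infer_instance
  · obtain hB | hB : F.obj B = 0 ∨ F.obj B = 1 := by omega
    · have hA := obj_eq_zero_of_hom f hB
      exact Or.inr ⟨Or.inl hA, hA.trans hB.symm⟩
    · exact Or.inl (Or.inl hB)

lemma isWFS_cof_inf_weq_fib : IsWFS (fun _ _ f => cof F f ∧ weq F f) (fib F) := by
  refine .of_hasLiftingProperty_of_forall_or (fun _ _ f hf => ?_) (fun _ _ g hg => ?_)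
    (fun A B X Y f g hf hg => ?_) (fun A B f => ?_)
  · rw [MorphismProperty.isomorphisms.iff] at hf
    exact ⟨Or.inr hf, obj_eq_of_isIso f⟩
  · exact Or.inr hg
  · obtain ⟨hB | hf, hAB⟩ := hf
    · obtain hX | hg := hg
      · have hA : F.obj A = 1 := hAB.trans hB
        have : IsEmpty (A ⟶ X) := isEmpty_hom_of_obj_lt F (by omega)
        exact .of_isEmpty_hom_left f g
      · infer_instance
    · infer_instance
  · obtain hA | hA : F.obj A = 0 ∨ F.obj A = 1 := by omega
    · exact Or.inr (Or.inl hA)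
    · have hB := obj_eq_one_of_hom f hA
      exact Or.inl ⟨Or.inl hB, hA.trans hB.symm⟩

lemma weq_of_isPushout {A B C' P : C} {w : A ⟶ C'} {i : A ⟶ B} {h : C' ⟶ P} {k : B ⟶ P}
    (hpo : IsPushout w i h k) (hw : weq F w) (hi : cof F i) : weq F k := by
  obtain hB | hi := hi
  · exact hB.trans (obj_eq_one_of_hom k hB).symm
  · have := hpo.isIso_inl_of_isIso hi
    exact (obj_eq_of_isIso i).symm.trans (hw.trans (obj_eq_of_isIso h))

lemma weq_of_isPullback {Q X B Y : C} {q : Q ⟶ X} {w' : Q ⟶ B} {p : X ⟶ Y} {w : B ⟶ Y}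
    (hpb : IsPullback q w' p w) (hw : weq F w) (hp : fib F p) : weq F q := by
  obtain hX | hp := hp
  · exact (obj_eq_zero_of_hom q hX).trans hX.symm
  · have := hpb.isIso_snd_of_isIso hp
    exact (obj_eq_of_isIso w').trans (hw.trans (obj_eq_of_isIso p).symm)

end BalancedModelStructure

theorem balanced_modelStructure_of_cut_general
    {C : Type u} [Category.{v} C]
    (F : C ⥤ Fin 2)
    (W : MorphismProperty C) (hW : W = fun A B _ => F.obj A = F.obj B)
    (Cof : MorphismProperty C) (hCof : Cof = fun A B f => F.obj B = 1 ∨ IsIso f)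
    (Fib : MorphismProperty C) (hFib : Fib = fun A B f => F.obj A = 0 ∨ IsIso f) :
    IsModelStructure W Cof Fib ∧
    (∀ ⦃A B C' P : C⦄ (w : A ⟶ C') (i : A ⟶ B) (h : C' ⟶ P) (k : B ⟶ P),
      IsPushout w i h k → W w → Cof i → W k) ∧
    (∀ ⦃Q X B Y : C⦄ (q : Q ⟶ X) (w' : Q ⟶ B) (p : X ⟶ Y) (w : B ⟶ Y),
      IsPullback q w' p w → W w → Fib p → W q) := by
  subst hW hCof hFib
  exact ⟨⟨twoOfThree_obj_eq F.obj, BalancedModelStructure.isWFS_cof_fib_inf_weq,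
      BalancedModelStructure.isWFS_cof_inf_weq_fib⟩,
    fun _ _ _ _ _ _ _ _ => BalancedModelStructure.weq_of_isPushout,
    fun _ _ _ _ _ _ _ _ => BalancedModelStructure.weq_of_isPullback⟩

/-- The balanced model structure associated to a cut `F : C ⥤ Fin 2`:
weak equivalences `{f : A ⟶ B | F.obj A = F.obj B}`, cofibrations
`{f : A ⟶ B | F.obj B = 1} ∪ isos`, fibrations `{f : A ⟶ B | F.obj A = 0} ∪ isos`.
It is both left proper and right proper. -/
theorem balanced_modelStructure_of_cut
    {C : Type u} [Category.{v} C] [HasFiniteLimits C] [HasFiniteColimits C]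
    (F : C ⥤ Fin 2)
    (W : MorphismProperty C) (hW : W = fun A B _ => F.obj A = F.obj B)
    (Cof : MorphismProperty C) (hCof : Cof = fun A B f => F.obj B = 1 ∨ IsIso f)
    (Fib : MorphismProperty C) (hFib : Fib = fun A B f => F.obj A = 0 ∨ IsIso f) :
    IsModelStructure W Cof Fib ∧
    (∀ ⦃A B C' P : C⦄ (w : A ⟶ C') (i : A ⟶ B) (h : C' ⟶ P) (k : B ⟶ P),
      IsPushout w i h k → W w → Cof i → W k) ∧
    (∀ ⦃Q X B Y : C⦄ (q : Q ⟶ X) (w' : Q ⟶ B) (p : X ⟶ Y) (w : B ⟶ Y),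
      IsPullback q w' p w → W w → Fib p → W q) :=
  balanced_modelStructure_of_cut_general F W hW Cof hCof Fib hFib
end

section
/- Let C be a category with all finite limits and colimits and let F : C ⥤ E be a cut, where E is the preorder with two objects 0 < 1 viewed as a category (e.g. Fin 2 with its order). Define W = {f : A ⟶ B | F.obj A = 1} ∪ {isomorphisms}, Cof = all morphisms of C, and Fib = W.rlp. Then (W, Cof, Fib) is a model structure on C, and it is left proper: given any pushout square with sides w : A ⟶ C in W and i : A ⟶ B, the induced morphism B ⟶ P opposite w lies in W. -/
open CategoryTheory CategoryTheory.Limits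

universe v u

section Aux

variable {C : Type u} [Category.{v} C] (F : C ⥤ Fin 2)

lemma cut_one_of_map {X Y : C} (f : X ⟶ Y) (h : F.obj X = 1) : F.obj Y = 1 := by
  have hle := leOfHom (F.map f)
  revert hle h
  generalize F.obj X = a; generalize F.obj Y = b
  revert a b; decide

lemma cut_eq_of_isIso {X Y : C} (f : X ⟶ Y) (hf : IsIso f) : F.obj X = F.obj Y := by
  have := hf
  exact le_antisymm (leOfHom (F.map f)) (leOfHom (F.map (inv f)))

lemma isIso_of_self_lift {X Y : C} (p : X ⟶ Y) (h : HasLiftingProperty p p) : IsIso p := by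
  have sq : CommSq (𝟙 X) p p (𝟙 Y) := ⟨by simp⟩
  exact ⟨sq.lift, sq.fac_left, sq.fac_right⟩

end Aux

/-- The model structure `ℂ^{rF}` associated to a cut `F : C ⥤ Fin 2`: weak
equivalences `{f : A ⟶ B | F.obj A = 1} ∪ isos`, all morphisms cofibrations, and
fibrations the right lifting class of the weak equivalences.  It is left proper. -/
theorem right_modelStructure_of_cut
    {C : Type u} [Category.{v} C] [HasFiniteLimits C] [HasFiniteColimits C]
    (F : C ⥤ Fin 2)
    (W : MorphismProperty C) (hW : W = fun A _ f => F.obj A = 1 ∨ IsIso f) :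
    IsModelStructure W (fun _ _ _ => True) (MorphismPropertyRLP W) ∧
    (∀ ⦃A B C' P : C⦄ (w : A ⟶ C') (i : A ⟶ B) (h : C' ⟶ P) (k : B ⟶ P),
      IsPushout w i h k → W w → W k) := by
  subst hW
  have hmono : ∀ {X Y : C} (f : X ⟶ Y), F.obj X = 1 → F.obj Y = 1 :=
    fun f h => cut_one_of_map F f h
  have hzero : ∀ a : Fin 2, a = 1 ∨ a = 0 := by decide
  have hne : (0 : Fin 2) ≠ 1 := by decide
  set W : MorphismProperty C := fun A _ f => F.obj A = 1 ∨ IsIso f with hWdef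
  -- morphisms with source mapping to 0 are in the rlp of W
  have hrlp0 : ∀ {X Y : C} (f : X ⟶ Y), F.obj X = 0 → MorphismPropertyRLP W f := by
    intro X Y f hX A B g hg
    rcases hg with hg | hg
    · constructor
      intro top bottom sq
      exact absurd (hmono top hg) (hX ▸ hne)
    · haveI := hg; infer_instance
  -- isomorphisms are in the rlp of W
  have hrlpiso : ∀ {X Y : C} (f : X ⟶ Y), IsIso f → MorphismPropertyRLP W f := by
    intro X Y f hf A B g _
    haveI := hf; infer_instance
  -- trivial fibrations are isomorphisms
  have htriv : ∀ {X Y : C} (f : X ⟶ Y), MorphismPropertyRLP W f → W f → IsIso f := by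
    intro X Y f hr hw
    exact isIso_of_self_lift f (hr f hw)
  refine ⟨⟨?_, ⟨?_, ?_, ?_⟩, ⟨?_, ?_, ?_⟩⟩, ?_⟩
  · -- two out of three
    intro X Y Z f g
    refine ⟨?_, ?_, ?_⟩
    · rintro (hf | hf) hg
      · exact Or.inl hf
      · rcases hg with hg | hg
        · exact Or.inl ((cut_eq_of_isIso F f hf).symm ▸ hg)
        · haveI := hf; haveI := hg; exact Or.inr inferInstance
    · rintro (hf | hf) (hfg | hfg)
      · exact Or.inl (hmono f hf)
      · exact Or.inl (hmono f hf)
      · exact Or.inl (hmono f hfg)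
      · haveI := hf; haveI := hfg
        exact Or.inr (IsIso.of_isIso_comp_left f g)
    · rintro (hg | hg) (hfg | hfg)
      · exact Or.inl hfg
      · have hXZ := cut_eq_of_isIso F (f ≫ g) hfg
        exact Or.inl (hXZ ▸ hmono g hg)
      · exact Or.inl hfg
      · haveI := hg; haveI := hfg
        exact Or.inr (IsIso.of_isIso_comp_right f g)
  · -- wfs₁ llp_eq : all = llp (triv fib)
    funext X Y f
    simp only [eq_iff_iff, true_iff]
    intro A B g hg
    haveI : IsIso g := htriv g hg.1 hg.2
    infer_instance
  · -- wfs₁ rlp_eq : triv fib = rlp (all)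
    funext X Y f
    simp only [eq_iff_iff]
    constructor
    · rintro ⟨hr, hw⟩ A B g _
      haveI : IsIso f := htriv f hr hw
      infer_instance
    · intro hr
      haveI : IsIso f := isIso_of_self_lift f (hr f trivial)
      exact ⟨hrlpiso f inferInstance, Or.inr inferInstance⟩
  · -- wfs₁ factor
    intro X Y f
    exact ⟨Y, f, 𝟙 Y, trivial, ⟨hrlpiso (𝟙 Y) inferInstance, Or.inr inferInstance⟩,
      Category.comp_id f⟩
  · -- wfs₂ llp_eq : W = llp (fib)
    funext X Y f
    simp only [eq_iff_iff]
    constructor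
    · rintro ⟨-, hw⟩ A B g hg
      exact hg f hw
    · intro hl
      rcases hzero (F.obj X) with hX | hX
      · exact ⟨trivial, Or.inl hX⟩
      · exact ⟨trivial, Or.inr (isIso_of_self_lift f (hl f (hrlp0 f hX)))⟩
  · -- wfs₂ rlp_eq
    funext X Y f
    simp only [eq_iff_iff]
    constructor
    · intro hr A B g hg
      exact hr g hg.2
    · intro hr A B g hg
      exact hr g ⟨trivial, hg⟩
  · -- wfs₂ factor
    intro X Y f
    rcases hzero (F.obj X) with hX | hX
    · exact ⟨Y, f, 𝟙 Y, ⟨trivial, Or.inl hX⟩, hrlpiso (𝟙 Y) inferInstance,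
        Category.comp_id f⟩
    · exact ⟨X, 𝟙 X, f, ⟨trivial, Or.inr inferInstance⟩, hrlp0 f hX,
        Category.id_comp f⟩
  · -- left properness
    intro A B C' P w i h k hp hw
    rcases hw with hw | hw
    · exact Or.inl (hmono i hw)
    · haveI := hw
      refine Or.inr ?_
      have hcomm : w ≫ inv w ≫ i = i ≫ 𝟙 B := by simp
      refine ⟨hp.desc (inv w ≫ i) (𝟙 B) hcomm, hp.inr_desc _ _ _, ?_⟩
      apply hp.hom_ext
      · rw [← Category.assoc, hp.inl_desc]
        simp [← hp.toCommSq.w]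
      · rw [← Category.assoc, hp.inr_desc]
        simp
end

section
/- Let C be a category with all finite limits and colimits. Define W = {f : A ⟶ B | there exists some morphism B ⟶ A in C} (the weak equivalences), TFib = the class of split epimorphisms, Cof = TFib.llp, and Fib = (Cof ∩ W).rlp. Then (W, Cof, Fib) is a model structure on C (the generalized core model structure): W satisfies two-out-of-three, the pairs (Cof, TFib) and (Cof ∩ W, Fib) are weak factorization systems, and Fib ∩ W = TFib, i.e. the acyclic fibrations are exactly the split epimorphisms. -/
/-! Everything rests on coproduct constructions. A morphism lifting against
`coprod.inl : X ⟶ X ⨿ Y` is a split epimorphism, while coprojections lift against split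
epimorphisms; this gives the first factorization system, via `X ⟶ X ⨿ Y ⟶ Y`. For the second one,
`f : X ⟶ Y` factors through `coprod.inl : X ⟶ X ⨿ (X ⨯ Y)`, an acyclic cofibration, followed by
`p = coprod.desc f prod.snd`, which is surjective on maps out of any object mapping to its
domain. A cofibration `i : A ⟶ B` is a retract of `coprod.inl : A ⟶ A ⨿ B` (lift it against the
split epimorphism `coprod.desc i (𝟙 B)`), and if moreover there is a map `B ⟶ A`, that
surjectivity of `p` is exactly what is needed to lift `i` against `p`. -/

open CategoryTheory CategoryTheory.Limits

universe v u

namespace GeneralizedCore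

attribute [local simp] coprod.inl_desc coprod.inr_desc coprod.inl_desc_assoc coprod.inr_desc_assoc
  prod.lift_fst prod.lift_snd prod.lift_fst_assoc prod.lift_snd_assoc

variable {C : Type u} [Category.{v} C]

variable (C) in
def weakEquivalences : MorphismProperty C := fun A B _ => Nonempty (B ⟶ A)

variable (C) in
def splitEpimorphisms : MorphismProperty C := fun _ _ f => IsSplitEpi f

variable (C) in
def cofibrations : MorphismProperty C := MorphismPropertyLLP (splitEpimorphisms C)

variable (C) in
def fibrations : MorphismProperty C :=
  MorphismPropertyRLP (fun _ _ f => cofibrations C f ∧ weakEquivalences C f)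

lemma twoOfThree_weakEquivalences : TwoOfThree (weakEquivalences C) := by
  intro X Y Z f g
  refine ⟨?_, ?_, ?_⟩
  · rintro ⟨r⟩ ⟨s⟩; exact ⟨s ≫ r⟩
  · rintro - ⟨t⟩; exact ⟨t ≫ f⟩
  · rintro - ⟨t⟩; exact ⟨g ≫ t⟩

lemma splitEpimorphisms_le_fibrations {X Y : C} (g : X ⟶ Y) (hg : splitEpimorphisms C g) :
    fibrations C g :=
  fun _ _ _ hf => hf.1 g hg

section Factorizations

variable [HasBinaryCoproducts C]

lemma hasLiftingProperty_coprod_inl_of_isSplitEpi (X Y : C) {P Q : C} (g : P ⟶ Q)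
    [IsSplitEpi g] : HasLiftingProperty (coprod.inl : X ⟶ X ⨿ Y) g where
  sq_hasLift {u v} sq := ⟨⟨{
    l := coprod.desc u ((coprod.inr ≫ v) ≫ section_ g)
    fac_left := coprod.inl_desc _ _
    fac_right := by
      ext
      · simpa using sq.w
      · simp }⟩⟩

lemma isSplitEpi_of_hasLiftingProperty_coprod_inl {X Y : C} (g : X ⟶ Y)
    [HasLiftingProperty (coprod.inl : X ⟶ X ⨿ Y) g] : IsSplitEpi g := by
  have sq : CommSq (𝟙 X) coprod.inl g (coprod.desc g (𝟙 Y)) := ⟨by simp⟩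
  exact IsSplitEpi.mk' ⟨coprod.inr ≫ sq.lift, by simp⟩

instance isSplitEpi_coprod_desc_id {X Y : C} (f : X ⟶ Y) :
    IsSplitEpi (coprod.desc f (𝟙 Y)) :=
  IsSplitEpi.mk' ⟨coprod.inr, coprod.inr_desc _ _⟩

lemma cofibrations_coprod_inl (X Y : C) : cofibrations C (coprod.inl : X ⟶ X ⨿ Y) :=
  fun _ _ g (_ : IsSplitEpi g) => hasLiftingProperty_coprod_inl_of_isSplitEpi X Y g

lemma rlp_cofibrations : MorphismPropertyRLP (cofibrations C) = splitEpimorphisms C := by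
  ext X Y g
  refine ⟨fun hg => ?_, fun hg _ _ f hf => hf g hg⟩
  have := hg _ (cofibrations_coprod_inl X Y)
  exact isSplitEpi_of_hasLiftingProperty_coprod_inl g

lemma isWFS_cofibrations_splitEpimorphisms :
    IsWFS (cofibrations C) (splitEpimorphisms C) where
  llp_eq := rfl
  rlp_eq := rlp_cofibrations.symm
  factor X Y f := ⟨X ⨿ Y, coprod.inl, coprod.desc f (𝟙 Y), cofibrations_coprod_inl X Y,
    isSplitEpi_coprod_desc_id f, coprod.inl_desc _ _⟩

lemma fibrations_inf_weakEquivalences :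
    (fun _ _ f => fibrations C f ∧ weakEquivalences C f : MorphismProperty C) =
      splitEpimorphisms C := by
  ext X Y g
  refine ⟨fun ⟨hg, ⟨t⟩⟩ => ?_, fun hg => ⟨splitEpimorphisms_le_fibrations g hg, ?_⟩⟩
  · have := hg _ ⟨cofibrations_coprod_inl X Y, ⟨coprod.desc (𝟙 X) t⟩⟩
    exact isSplitEpi_of_hasLiftingProperty_coprod_inl g
  · have : IsSplitEpi g := hg
    exact ⟨section_ g⟩

lemma hasLiftingProperty_of_exists_comp_eq {A B P Q : C} (i : A ⟶ B) (g : P ⟶ Q)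
    [HasLiftingProperty i (coprod.desc i (𝟙 B))] (r : B ⟶ A)
    (hg : Nonempty (B ⟶ P) → ∀ v : B ⟶ Q, ∃ w : B ⟶ P, w ≫ g = v) :
    HasLiftingProperty i g where
  sq_hasLift {u v} sq := by
    have retract : CommSq coprod.inl i (coprod.desc i (𝟙 B)) (𝟙 B) := ⟨by simp⟩
    obtain ⟨w, hw⟩ := hg ⟨r ≫ u⟩ v
    refine ⟨⟨{ l := retract.lift ≫ coprod.desc u w, fac_left := by simp, fac_right := ?_ }⟩⟩
    calc (retract.lift ≫ coprod.desc u w) ≫ g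
        = retract.lift ≫ coprod.desc i (𝟙 B) ≫ v := by
          rw [Category.assoc]; congr 1; ext <;> simp [sq.w, hw]
      _ = v := by rw [CommSq.fac_right_assoc, Category.id_comp]

variable [HasBinaryProducts C]

lemma exists_comp_coprod_desc_prod_snd_eq {X Y B : C} (f : X ⟶ Y)
    (hB : Nonempty (B ⟶ X ⨿ (X ⨯ Y))) (v : B ⟶ Y) :
    ∃ w : B ⟶ X ⨿ (X ⨯ Y), w ≫ coprod.desc f prod.snd = v :=
  let ⟨a⟩ := hB
  ⟨prod.lift (a ≫ coprod.desc (𝟙 X) prod.fst) v ≫ coprod.inr, by simp⟩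

lemma nonempty_hom_of_hasLiftingProperty_coprod_desc_prod_snd {X Y : C} (f : X ⟶ Y)
    [HasLiftingProperty f (coprod.desc f (prod.snd : X ⨯ Y ⟶ Y))] : Nonempty (Y ⟶ X) :=
  have sq : CommSq coprod.inl f (coprod.desc f prod.snd) (𝟙 Y) := ⟨by simp⟩
  ⟨sq.lift ≫ coprod.desc (𝟙 X) prod.fst⟩

lemma fibrations_coprod_desc_prod_snd {X Y : C} (f : X ⟶ Y) :
    fibrations C (coprod.desc f (prod.snd : X ⨯ Y ⟶ Y)) := by
  rintro A B i ⟨hi, ⟨r⟩⟩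
  have := hi _ (isSplitEpi_coprod_desc_id i)
  exact hasLiftingProperty_of_exists_comp_eq i _ r (exists_comp_coprod_desc_prod_snd_eq f)

lemma llp_fibrations :
    MorphismPropertyLLP (fibrations C) =
      fun _ _ f => cofibrations C f ∧ weakEquivalences C f := by
  ext X Y f
  refine ⟨fun hf => ⟨fun _ _ g hg => hf g (splitEpimorphisms_le_fibrations g hg), ?_⟩,
    fun hf _ _ g hg => hg f hf⟩
  have := hf _ (fibrations_coprod_desc_prod_snd f)
  exact nonempty_hom_of_hasLiftingProperty_coprod_desc_prod_snd f

lemma isWFS_acyclicCofibrations_fibrations :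
    IsWFS (fun _ _ f => cofibrations C f ∧ weakEquivalences C f) (fibrations C) where
  llp_eq := llp_fibrations.symm
  rlp_eq := rfl
  factor X Y f := ⟨X ⨿ (X ⨯ Y), coprod.inl, coprod.desc f prod.snd,
    ⟨cofibrations_coprod_inl _ _, ⟨coprod.desc (𝟙 X) prod.fst⟩⟩,
    fibrations_coprod_desc_prod_snd f, coprod.inl_desc _ _⟩

end Factorizations

end GeneralizedCore

open GeneralizedCore in
/-- The generalized core model structure on a finitely bicomplete category `C`:
weak equivalences `W = {f : A ⟶ B | ∃ B ⟶ A}`, trivial fibrations the split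
epimorphisms, cofibrations their left lifting class, fibrations the right lifting
class of the acyclic cofibrations.  `W` satisfies two-out-of-three, the pairs
`(Cof, TFib)` and `(Cof ∩ W, Fib)` are weak factorization systems, and the acyclic
fibrations are exactly the split epimorphisms. -/
theorem generalizedCore_modelStructure
    {C : Type u} [Category.{v} C] [HasFiniteLimits C] [HasFiniteColimits C]
    (W TFib Cof Fib : MorphismProperty C)
    (hW : W = fun A B _ => Nonempty (B ⟶ A))
    (hTFib : TFib = fun _ _ f => IsSplitEpi f)
    (hCof : Cof = MorphismPropertyLLP TFib)
    (hFib : Fib = MorphismPropertyRLP (fun _ _ f => Cof f ∧ W f)) :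
    IsModelStructure W Cof Fib ∧
    TwoOfThree W ∧
    IsWFS Cof TFib ∧
    IsWFS (fun _ _ f => Cof f ∧ W f) Fib ∧
    (fun _ _ f => Fib f ∧ W f : MorphismProperty C) = TFib := by
  subst hW hTFib hCof hFib
  have acyclicFibrations := fibrations_inf_weakEquivalences (C := C)
  have cofibrationsWFS := isWFS_cofibrations_splitEpimorphisms (C := C)
  exact ⟨⟨twoOfThree_weakEquivalences, acyclicFibrations ▸ cofibrationsWFS,
    isWFS_acyclicCofibrations_fibrations⟩, twoOfThree_weakEquivalences, cofibrationsWFS,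
    isWFS_acyclicCofibrations_fibrations, acyclicFibrations⟩
end

section
/- Let C be a category with an initial object, binary coproducts, and pullbacks, which has splitting coproducts and disjoint coproducts. Then every morphism c : A ⟶ B belonging to the left lifting class of the split epimorphisms (i.e. c ⧄ g for every split epimorphism g) is isomorphic to a coproduct coprojection: there exist an object X and an isomorphism φ : A ⨿ X ≅ B such that the first coprojection A ⟶ A ⨿ X composed with φ equals c. -/
open CategoryTheory CategoryTheory.Limits

universe v u

/-- A category has splitting coproducts if every morphism into a binary coproduct
is, up to isomorphism, a coproduct of two morphisms. -/
def HasSplittingCoproducts (C : Type u) [Category.{v} C] [HasBinaryCoproducts C] : Prop :=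
  ∀ ⦃X A B : C⦄ (f : X ⟶ A ⨿ B), ∃ (XL XR : C) (fL : XL ⟶ A) (fR : XR ⟶ B)
    (φ : XL ⨿ XR ≅ X), φ.hom ≫ f = coprod.map fL fR

/-!
Since `[c, 𝟙] : A ⨿ B ⟶ B` is split by `inr`, lifting gives `l : B ⟶ A ⨿ B` with `c ≫ l = inl`
and `l ≫ [c, 𝟙] = 𝟙`. Splitting `l` as `m ⨿ k` along `B ≅ Y ⨿ Z`, the second equation says that
the summand `Y ⟶ B` is `m ≫ c`; so `m` is mono, and `c` is the coprojection of `Y ⨿ Z` as soon as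
`m` is an isomorphism. To split `m`, split `A ⟶ Y ⨿ Z` as `A ≅ A₁ ⨿ A₂`: because `c ≫ l = inl`,
the summand `A₂` lies over both `A` and `B` in `A ⨿ B`, hence maps to their initial pullback, and
`A₁ ⟶ Y` gives the section.
-/

section

variable {C : Type u} [Category.{v} C] [HasBinaryCoproducts C]

theorem exists_section_of_hasLiftingProperty {A B : C} (c : A ⟶ B)
    [HasLiftingProperty c (coprod.desc c (𝟙 B))] :
    ∃ l : B ⟶ A ⨿ B, c ≫ l = coprod.inl ∧ l ≫ coprod.desc c (𝟙 B) = 𝟙 B :=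
  let sq : CommSq coprod.inl c (coprod.desc c (𝟙 B)) (𝟙 B) :=
    ⟨(coprod.inl_desc _ _).trans (Category.comp_id c).symm⟩
  ⟨sq.lift, sq.fac_left, sq.fac_right⟩

theorem exists_comp_eq_of_comp_inl_eq_comp_inr {X W Z : C} [BinaryCoproductDisjoint X W]
    [HasPullback (coprod.inl : X ⟶ X ⨿ W) coprod.inr] {f : Z ⟶ X} {g : Z ⟶ W}
    (h : f ≫ coprod.inl = g ≫ coprod.inr) {Y : C} (m : Y ⟶ X) : ∃ e : Z ⟶ Y, e ≫ m = f := by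
  let hI : IsInitial (pullback (coprod.inl : X ⟶ X ⨿ W) coprod.inr) :=
    IsInitial.ofBinaryCoproductDisjoint
  refine ⟨pullback.lift f g h ≫ hI.to Y, ?_⟩
  rw [Category.assoc, hI.hom_ext (hI.to Y ≫ m) (pullback.fst _ _), pullback.lift_fst]

theorem isSplitEpi_of_comp_coprod_map_eq_inl [HasPullbacks C] (hsplit : HasSplittingCoproducts C)
    {A W Y Z : C} [BinaryCoproductDisjoint A W] {m : Y ⟶ A} {k : Z ⟶ W} (f : A ⟶ Y ⨿ Z)
    (hf : f ≫ coprod.map m k = coprod.inl) : IsSplitEpi m := by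
  obtain ⟨A₁, A₂, f₁, f₂, ψ, hψ⟩ := hsplit f
  have hψinl : ψ.hom ≫ coprod.inl = coprod.map (f₁ ≫ m) (f₂ ≫ k) := by
    rw [← hf, ← Category.assoc, hψ, coprod.map_map]
  have h₁ : coprod.inl ≫ ψ.hom = f₁ ≫ m := by
    rw [← cancel_mono (coprod.inl : A ⟶ A ⨿ W), Category.assoc, hψinl]
    simp
  obtain ⟨e, he⟩ := exists_comp_eq_of_comp_inl_eq_comp_inr
    (f := coprod.inr ≫ ψ.hom) (g := f₂ ≫ k) (by rw [Category.assoc, hψinl]; simp) m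
  refine IsSplitEpi.mk' ⟨ψ.inv ≫ coprod.desc f₁ e, ?_⟩
  rw [← cancel_epi ψ.hom, Category.assoc, ψ.hom_inv_id_assoc, Category.comp_id]
  ext
  · exact (coprod.inl_desc_assoc _ _ _).trans h₁.symm
  · exact (coprod.inr_desc_assoc _ _ _).trans he

end

/-- In a category with splitting and disjoint coproducts, every morphism with the
left lifting property with respect to all split epimorphisms is isomorphic to a
coproduct coprojection. -/
theorem cofibration_isCoprodInclusion
    {C : Type u} [Category.{v} C] [HasInitial C] [HasBinaryCoproducts C]
    [HasPullbacks C] (hsplit : HasSplittingCoproducts C)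
    [∀ A B : C, BinaryCoproductDisjoint A B]
    {A B : C} (c : A ⟶ B)
    (hc : ∀ ⦃X Y : C⦄ (g : X ⟶ Y), IsSplitEpi g → HasLiftingProperty c g) :
    ∃ (X : C) (φ : A ⨿ X ≅ B), coprod.inl ≫ φ.hom = c := by
  have := hc (coprod.desc c (𝟙 B)) (IsSplitEpi.mk' ⟨coprod.inr, coprod.inr_desc _ _⟩)
  obtain ⟨l, hcl, hl⟩ := exists_section_of_hasLiftingProperty c
  obtain ⟨Y, Z, m, k, φ, hφ⟩ := hsplit l
  have hm : coprod.inl ≫ φ.hom = m ≫ c := by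
    rw [← Category.comp_id φ.hom, ← hl, reassoc_of% hφ, coprod.map_desc]
    exact coprod.inl_desc _ _
  have : Mono (m ≫ c) := hm ▸ inferInstance
  have : Mono m := mono_of_mono m c
  have : IsSplitEpi m := isSplitEpi_of_comp_coprod_map_eq_inl hsplit (c ≫ φ.inv)
    (by rw [Category.assoc, ← hφ, φ.inv_hom_id_assoc, hcl])
  have : IsIso m := isIso_of_mono_of_isSplitEpi m
  exact ⟨Z, coprod.mapIso (asIso m).symm (Iso.refl Z) ≪≫ φ, by simp [hm]⟩
end

section
/- Let C be a category with all finite limits and colimits which has splitting coproducts and disjoint coproducts, and consider the generalized core model structure: W = {f : A ⟶ B | there exists some morphism B ⟶ A}, Cof = (split epimorphisms).llp, Fib = (Cof ∩ W).rlp. Then this model structure is left proper and right proper: (i) given any pushout square with sides w : A ⟶ C in W and i : A ⟶ B in Cof, the induced morphism B ⟶ P opposite w lies in W; (ii) given any pullback square with sides w : B ⟶ Y in W and p : X ⟶ Y in Fib, the induced morphism Q ⟶ X opposite w lies in W. -/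
/-!
A cofibration `i : A ⟶ B` lifts against the split epi `prod.snd : Z ⨯ B ⟶ B` whenever there
is some map `B ⟶ Z`, so every map `A ⟶ Z` extends along `i`; dually, `coprod.inl : Z ⟶ Z ⨿ Z` is a trivial cofibration, so a fibration `p : X ⟶ Y` lifts
every map `Z ⟶ Y` as soon as there is some map `Z ⟶ X`. For left properness, extend
`w ≫ r ≫ i` along `i` (where `r` is a backward map of `w`) and glue with `r ≫ i` to obtain a map
out of the pushout; for right properness, lift `p ≫ s ≫ w` through `p` and pair it with `p ≫ s`
to obtain a map into the pullback.
-/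

open CategoryTheory CategoryTheory.Limits

universe v u

section LiftingAgainstProjections

variable {C : Type u} [Category.{v} C]

theorem isSplitEpi_prod_snd_of_hom {Z B : C} [HasBinaryProduct Z B] (g : B ⟶ Z) :
    IsSplitEpi (prod.snd : Z ⨯ B ⟶ B) :=
  IsSplitEpi.mk' ⟨prod.lift g (𝟙 B), prod.lift_snd _ _⟩

theorem exists_comp_eq_of_hasLiftingProperty_prod_snd {A B Z : C} [HasBinaryProduct Z B]
    (i : A ⟶ B) [HasLiftingProperty i (prod.snd : Z ⨯ B ⟶ B)] (f : A ⟶ Z) :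
    ∃ y : B ⟶ Z, i ≫ y = f := by
  have sq : CommSq (prod.lift f i) i prod.snd (𝟙 B) := ⟨by rw [prod.lift_snd, Category.comp_id]⟩
  exact ⟨sq.lift ≫ prod.fst, by rw [sq.fac_left_assoc, prod.lift_fst]⟩

instance hasLiftingProperty_coprod_inl_of_isSplitEpi {Z Z' T S : C} [HasBinaryCoproduct Z Z']
    (g : T ⟶ S) [IsSplitEpi g] : HasLiftingProperty (coprod.inl : Z ⟶ Z ⨿ Z') g where
  sq_hasLift {u v} sq :=
    ⟨⟨{ l := coprod.desc u (coprod.inr ≫ v ≫ section_ g)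
        fac_left := coprod.inl_desc _ _
        fac_right := by
          ext
          · rw [coprod.inl_desc_assoc, sq.w]
          · simp only [coprod.inr_desc_assoc, Category.assoc, IsSplitEpi.id, Category.comp_id] }⟩⟩

theorem exists_comp_eq_of_hasLiftingProperty_coprod_inl {X Y Z : C} [HasBinaryCoproduct Z Z]
    (p : X ⟶ Y) [HasLiftingProperty (coprod.inl : Z ⟶ Z ⨿ Z) p] (g : Z ⟶ X) (f : Z ⟶ Y) :
    ∃ u : Z ⟶ X, u ≫ p = f := by
  have sq : CommSq g coprod.inl p (coprod.desc (g ≫ p) f) := ⟨(coprod.inl_desc _ _).symm⟩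
  exact ⟨coprod.inr ≫ sq.lift, by rw [Category.assoc, sq.fac_right, coprod.inr_desc]⟩

end LiftingAgainstProjections

/-- The generalized core model structure on a finitely bicomplete category with
splitting and disjoint coproducts is left proper and right proper. -/
theorem generalizedCore_proper
    {C : Type u} [Category.{v} C] [HasFiniteLimits C] [HasFiniteColimits C]
    (hsplit : HasSplittingCoproducts C) [∀ A B : C, BinaryCoproductDisjoint A B]
    (W Cof Fib : MorphismProperty C)
    (hW : W = fun A B _ => Nonempty (B ⟶ A))
    (hCof : Cof = MorphismPropertyLLP (fun _ _ f => IsSplitEpi f))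
    (hFib : Fib = MorphismPropertyRLP (fun _ _ f => Cof f ∧ W f)) :
    (∀ ⦃A B C' P : C⦄ (w : A ⟶ C') (i : A ⟶ B) (h : C' ⟶ P) (k : B ⟶ P),
      IsPushout w i h k → W w → Cof i → W k) ∧
    (∀ ⦃Q X B Y : C⦄ (q : Q ⟶ X) (w' : Q ⟶ B) (p : X ⟶ Y) (w : B ⟶ Y),
      IsPullback q w' p w → W w → Fib p → W q) := by
  subst hW hCof hFib
  refine ⟨fun A B C' P w i h k hPO ⟨r⟩ hi => ?_, fun Q X B Y q w' p w hPB ⟨s⟩ hp => ?_⟩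
  · have := hi (prod.snd : B ⨯ B ⟶ B) (isSplitEpi_prod_snd_of_hom (𝟙 B))
    obtain ⟨y, hy⟩ := exists_comp_eq_of_hasLiftingProperty_prod_snd i (w ≫ r ≫ i)
    exact ⟨hPO.desc (r ≫ i) y hy.symm⟩
  · have hinl : MorphismPropertyLLP (fun _ _ f => IsSplitEpi f) (coprod.inl : X ⟶ X ⨿ X) :=
      fun _ _ _ _ => inferInstance
    have := hp coprod.inl ⟨hinl, ⟨coprod.desc (𝟙 X) (𝟙 X)⟩⟩
    obtain ⟨u, hu⟩ := exists_comp_eq_of_hasLiftingProperty_coprod_inl p (𝟙 X) (p ≫ s ≫ w)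
    exact ⟨hPB.lift u (p ≫ s) (by rw [hu, Category.assoc])⟩
end

section
/- Let C be a category with all finite limits and colimits. Define W = {f : A ⟶ B | there exists some morphism B ⟶ A in C}, TCof = the class of split monomorphisms, Fib = TCof.rlp, and Cof = (W ∩ Fib).llp. Then (W, Cof, Fib) is a model structure on C (the generalized cocore model structure): W satisfies two-out-of-three, the pairs (TCof, Fib) and (Cof, W ∩ Fib) are weak factorization systems, and Cof ∩ W = TCof, i.e. the acyclic cofibrations are exactly the split monomorphisms. -/
open CategoryTheory CategoryTheory.Limits

universe v u

/-!
Product projections `prod.snd : X ⨯ Y ⟶ Y` lift against split monomorphisms, and lifting a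
fibration `g` against the split mono `prod.lift (𝟙 X) g` exhibits `g` as a retract of such a
projection. So `f = prod.lift (𝟙 X) f ≫ prod.snd` factors `f`, and the retract argument makes
(split monos, fibrations) a weak factorization system. Testing against the acyclic fibrations
`prod.snd : Z ⨯ B ⟶ B` (acyclic as soon as `B ⟶ Z` exists) shows that `f : A ⟶ B` is a
cofibration iff every `A ⟶ Z` extends along `f` whenever some `B ⟶ Z` exists. Then
`prod.lift coprod.inl f : X ⟶ (X ⨿ Y) ⨯ Y` is a cofibration factoring `f` through an acyclic
fibration, and an acyclic cofibration `f : A ⟶ B` splits by extending `𝟙 A` along it.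
-/

open MorphismProperty

theorem IsWFS.of_isWeakFactorizationSystem {C : Type u} [Category.{v} C]
    (L R : MorphismProperty C) [IsWeakFactorizationSystem L R] : IsWFS L R where
  llp_eq := (llp_eq_of_wfs L R).symm
  rlp_eq := (rlp_eq_of_wfs L R).symm
  factor _ _ f :=
    let h := factorizationData L R f
    ⟨h.Z, h.i, h.p, h.hi, h.hp, h.fac⟩

namespace GeneralizedCocore

attribute [local simp] prod.lift_fst prod.lift_snd prod.lift_fst_assoc prod.lift_snd_assoc
  coprod.inl_desc coprod.inr_desc

variable (C : Type u) [Category.{v} C]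

def weakEquivalences : MorphismProperty C := fun A B _ => Nonempty (B ⟶ A)

def splitMonos : MorphismProperty C := fun _ _ f => IsSplitMono f

abbrev fibrations : MorphismProperty C := (splitMonos C).rlp

abbrev cofibrations : MorphismProperty C := (weakEquivalences C ⊓ fibrations C).llp

theorem twoOfThree_weakEquivalences : TwoOfThree (weakEquivalences C) := fun _ _ _ f g =>
  ⟨fun ⟨f'⟩ ⟨g'⟩ => ⟨g' ≫ f'⟩, fun _ ⟨h⟩ => ⟨h ≫ f⟩, fun _ ⟨h⟩ => ⟨g ≫ h⟩⟩

instance : (weakEquivalences C).IsStableUnderRetracts where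
  of_retract h := fun ⟨t⟩ => ⟨h.i.right ≫ t ≫ h.r.left⟩

instance : (splitMonos C).IsStableUnderRetracts where
  of_retract {_ _ _ _ f g} h (_ : IsSplitMono g) :=
    IsSplitMono.mk' ⟨h.i.right ≫ retraction g ≫ h.r.left, by
      rw [← h.i_w_assoc, IsSplitMono.id_assoc, h.retract_left]⟩

variable {C}

theorem splitMonos_le_cofibrations : splitMonos C ≤ cofibrations C :=
  fun _ _ i hi _ _ _ hp => hp.2 i hi

theorem prod_snd_mem_fibrations [HasBinaryProducts C] (X Y : C) :
    fibrations C (prod.snd : X ⨯ Y ⟶ Y) := by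
  intro A B i (_ : IsSplitMono i)
  refine ⟨fun {u v} sq => ⟨⟨⟨prod.lift (retraction i ≫ u ≫ prod.fst) v, ?_, by simp⟩⟩⟩⟩
  ext
  · simp
  · simp [sq.w]

theorem prod_snd_mem_weakEquivalences [HasBinaryProducts C] {X Y : C} (t : Y ⟶ X) :
    weakEquivalences C (prod.snd : X ⨯ Y ⟶ Y) :=
  ⟨prod.lift t (𝟙 Y)⟩

instance [HasBinaryProducts C] : HasFactorization (splitMonos C) (fibrations C) where
  nonempty_mapFactorizationData f :=
    ⟨{ Z := _ ⨯ _, i := prod.lift (𝟙 _) f, p := prod.snd, hi := IsSplitMono.mk' ⟨prod.fst, by simp⟩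
       hp := prod_snd_mem_fibrations _ _ }⟩

instance [HasBinaryProducts C] : IsWeakFactorizationSystem (splitMonos C) (fibrations C) :=
  .mk' _ _ fun i _ hi hp => hp i hi

theorem exists_retraction_prod_lift_of_mem_fibrations [HasBinaryProducts C] {X Y : C} {g : X ⟶ Y}
    (hg : fibrations C g) :
    ∃ h : X ⨯ Y ⟶ X, prod.lift (𝟙 X) g ≫ h = 𝟙 X ∧ h ≫ g = prod.snd := by
  have := hg (prod.lift (𝟙 X) g) (IsSplitMono.mk' ⟨prod.fst, by simp⟩)
  have sq : CommSq (𝟙 X) (prod.lift (𝟙 X) g) g prod.snd := ⟨by simp⟩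
  exact ⟨sq.lift, sq.fac_left, sq.fac_right⟩

theorem mem_cofibrations_iff [HasBinaryProducts C] {A B : C} (f : A ⟶ B) :
    cofibrations C f ↔ ∀ ⦃Z : C⦄, Nonempty (B ⟶ Z) → ∀ a : A ⟶ Z, ∃ b, f ≫ b = a := by
  constructor
  · rintro hf Z ⟨c⟩ a
    have := hf _ ⟨prod_snd_mem_weakEquivalences c, prod_snd_mem_fibrations Z B⟩
    have sq : CommSq (prod.lift a f) f prod.snd (𝟙 B) := ⟨by simp⟩
    exact ⟨sq.lift ≫ prod.fst, by rw [sq.fac_left_assoc, prod.lift_fst]⟩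
  · rintro hf X Y g ⟨⟨t⟩, hg⟩
    obtain ⟨h, hh, hhg⟩ := exists_retraction_prod_lift_of_mem_fibrations hg
    refine ⟨fun {u v} sq => ?_⟩
    obtain ⟨b, hb⟩ := hf ⟨v ≫ t⟩ u
    refine ⟨⟨⟨prod.lift b v ≫ h, ?_, by simp [hhg]⟩⟩⟩
    have hlift : f ≫ prod.lift b v = u ≫ prod.lift (𝟙 X) g := by ext <;> simp [hb, sq.w]
    rw [reassoc_of% hlift, hh, Category.comp_id]

theorem prod_lift_coprod_inl_mem_cofibrations [HasBinaryProducts C] [HasBinaryCoproducts C]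
    {X Y : C} (f : X ⟶ Y) :
    cofibrations C (prod.lift coprod.inl f : X ⟶ (X ⨿ Y) ⨯ Y) :=
  (mem_cofibrations_iff _).2 fun _ ⟨c⟩ a =>
    ⟨prod.fst ≫ coprod.desc a (prod.lift coprod.inr (𝟙 Y) ≫ c), by simp⟩

instance [HasBinaryProducts C] [HasBinaryCoproducts C] :
    HasFactorization (cofibrations C) (weakEquivalences C ⊓ fibrations C) where
  nonempty_mapFactorizationData f :=
    ⟨{ Z := _ ⨯ _, i := prod.lift coprod.inl f, p := prod.snd
       hi := prod_lift_coprod_inl_mem_cofibrations f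
       hp := ⟨prod_snd_mem_weakEquivalences coprod.inr, prod_snd_mem_fibrations _ _⟩ }⟩

instance [HasBinaryProducts C] [HasBinaryCoproducts C] :
    IsWeakFactorizationSystem (cofibrations C) (weakEquivalences C ⊓ fibrations C) :=
  .mk' _ _ fun _ p hi hp => hi p hp

variable (C) [HasBinaryProducts C]

theorem cofibrations_inf_weakEquivalences :
    cofibrations C ⊓ weakEquivalences C = splitMonos C := by
  apply le_antisymm
  · rintro X Y f ⟨hf, ⟨t⟩⟩
    obtain ⟨r, hr⟩ := (mem_cofibrations_iff f).1 hf ⟨t⟩ (𝟙 X)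
    exact IsSplitMono.mk' ⟨r, hr⟩
  · intro X Y f hf
    have : IsSplitMono f := hf
    exact ⟨splitMonos_le_cofibrations f hf, ⟨retraction f⟩⟩

theorem isWFS_splitMonos_fibrations : IsWFS (splitMonos C) (fibrations C) :=
  .of_isWeakFactorizationSystem _ _

variable [HasBinaryCoproducts C]

theorem isWFS_cofibrations : IsWFS (cofibrations C) (weakEquivalences C ⊓ fibrations C) :=
  .of_isWeakFactorizationSystem _ _

theorem isModelStructure :
    IsModelStructure (weakEquivalences C) (cofibrations C) (fibrations C) where
  twoOfThree := twoOfThree_weakEquivalences C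
  wfs₁ := show IsWFS _ (fibrations C ⊓ weakEquivalences C) from
    inf_comm (weakEquivalences C) _ ▸ isWFS_cofibrations C
  wfs₂ := show IsWFS (cofibrations C ⊓ weakEquivalences C) _ from
    cofibrations_inf_weakEquivalences C ▸ isWFS_splitMonos_fibrations C

end GeneralizedCocore

/-- The generalized cocore model structure on a finitely bicomplete category `C`:
weak equivalences `W = {f : A ⟶ B | ∃ B ⟶ A}`, trivial cofibrations the split
monomorphisms, fibrations their right lifting class, cofibrations the left lifting
class of the acyclic fibrations.  `W` satisfies two-out-of-three, the pairs
`(TCof, Fib)` and `(Cof, W ∩ Fib)` are weak factorization systems, and the acyclic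
cofibrations are exactly the split monomorphisms. -/
theorem generalizedCocore_modelStructure
    {C : Type u} [Category.{v} C] [HasFiniteLimits C] [HasFiniteColimits C]
    (W TCof Cof Fib : MorphismProperty C)
    (hW : W = fun A B _ => Nonempty (B ⟶ A))
    (hTCof : TCof = fun _ _ f => IsSplitMono f)
    (hFib : Fib = MorphismPropertyRLP TCof)
    (hCof : Cof = MorphismPropertyLLP (fun _ _ f => W f ∧ Fib f)) :
    IsModelStructure W Cof Fib ∧
    TwoOfThree W ∧
    IsWFS TCof Fib ∧
    IsWFS Cof (fun _ _ f => W f ∧ Fib f) ∧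
    (fun _ _ f => Cof f ∧ W f : MorphismProperty C) = TCof := by
  subst hW hTCof hFib hCof
  open GeneralizedCocore in
  exact ⟨isModelStructure C, twoOfThree_weakEquivalences C, isWFS_splitMonos_fibrations C,
    isWFS_cofibrations C, cofibrations_inf_weakEquivalences C⟩
end

section
/- Let C be a category with an initial object, binary coproducts, and pullbacks, which has splitting coproducts and disjoint coproducts. Then every morphism f : A ⟶ B which belongs to the left lifting class of the split epimorphisms and for which there exists some morphism B ⟶ A (i.e. every acyclic cofibration of the generalized core model structure) is a split monomorphism. Consequently the identity functor is a left Quillen functor from the generalized core model structure to the generalized cocore model structure. -/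
open CategoryTheory CategoryTheory.Limits

universe v u

/-!
Let `f : A ⟶ B` lift against split epimorphisms and let `w : B ⟶ A`. The map
`coprod.desc f (𝟙 B) : A ⨿ B ⟶ B` is split by `coprod.inr`, so lifting in the square with
top `coprod.inl` and bottom `𝟙 B` gives `l : B ⟶ A ⨿ B` with `f ≫ l = coprod.inl`; then
`l ≫ coprod.desc (𝟙 A) w` is a retraction of `f`.
-/

section

variable {C : Type u} [Category.{v} C]

theorem morphismPropertyRLP_antitone : Antitone (MorphismPropertyRLP (C := C)) :=
  fun _ _ hST _ _ _ hg _ _ f hf => hg f (hST f hf)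

variable [HasBinaryCoproducts C]

instance isSplitEpi_coprod_desc_id {A B : C} (f : A ⟶ B) :
    IsSplitEpi (coprod.desc f (𝟙 B)) :=
  ⟨⟨⟨coprod.inr, coprod.inr_desc _ _⟩⟩⟩

theorem exists_comp_eq_inl_of_hasLiftingProperty {A B : C} (f : A ⟶ B)
    [HasLiftingProperty f (coprod.desc f (𝟙 B))] : ∃ l : B ⟶ A ⨿ B, f ≫ l = coprod.inl :=
  let sq : CommSq coprod.inl f (coprod.desc f (𝟙 B)) (𝟙 B) :=
    ⟨by rw [Category.comp_id, coprod.inl_desc]⟩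
  ⟨sq.lift, sq.fac_left⟩

theorem isSplitMono_of_comp_eq_inl {A B Z : C} {f : A ⟶ B} {l : B ⟶ A ⨿ Z}
    (hl : f ≫ l = coprod.inl) (w : Z ⟶ A) : IsSplitMono f :=
  ⟨⟨l ≫ coprod.desc (𝟙 A) w, by rw [reassoc_of% hl, coprod.inl_desc]⟩⟩

theorem isSplitMono_of_llp_isSplitEpi {A B : C} {f : A ⟶ B}
    (hf : MorphismPropertyLLP (fun _ _ g => IsSplitEpi g) f) (w : B ⟶ A) : IsSplitMono f := by
  have := hf _ (isSplitEpi_coprod_desc_id f)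
  obtain ⟨l, hl⟩ := exists_comp_eq_inl_of_hasLiftingProperty f
  exact isSplitMono_of_comp_eq_inl hl w

end

/-- In a category with splitting and disjoint coproducts, every acyclic cofibration
of the generalized core model structure is a split monomorphism; consequently every
fibration of the generalized cocore model structure is a fibration of the
generalized core model structure, i.e. the identity functor is a left Quillen
functor from the generalized core model structure to the generalized cocore model
structure. -/
theorem core_acyclicCofibration_isSplitMono
    {C : Type u} [Category.{v} C] [HasInitial C] [HasBinaryCoproducts C]
    [HasPullbacks C] (hsplit : HasSplittingCoproducts C)
    [∀ A B : C, BinaryCoproductDisjoint A B]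
    (W CofCore FibCore FibCocore : MorphismProperty C)
    (hW : W = fun A B _ => Nonempty (B ⟶ A))
    (hCofCore : CofCore = MorphismPropertyLLP (fun _ _ f => IsSplitEpi f))
    (hFibCore : FibCore = MorphismPropertyRLP (fun _ _ f => CofCore f ∧ W f))
    (hFibCocore : FibCocore = MorphismPropertyRLP (fun _ _ f => IsSplitMono f)) :
    (∀ ⦃A B : C⦄ (f : A ⟶ B), CofCore f → W f → IsSplitMono f) ∧
    (∀ ⦃X Y : C⦄ (g : X ⟶ Y), FibCocore g → FibCore g) := by
  subst hW hCofCore hFibCore hFibCocore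
  have acyclicCofibration_isSplitMono :
      ∀ ⦃A B : C⦄ (f : A ⟶ B), MorphismPropertyLLP (fun _ _ g => IsSplitEpi g) f →
        Nonempty (B ⟶ A) → IsSplitMono f :=
    fun _ _ _ hf ⟨w⟩ => isSplitMono_of_llp_isSplitEpi hf w
  refine ⟨acyclicCofibration_isSplitMono, ?_⟩
  exact morphismPropertyRLP_antitone fun _ _ f hf => acyclicCofibration_isSplitMono f hf.1 hf.2
end

section
/- Let C be a category with all finite limits and colimits which has splitting coproducts and disjoint coproducts, and in which binary products distribute over binary coproducts (for all objects A, B, C the canonical morphism (A ⨯ B) ⨿ (A ⨯ C) ⟶ A ⨯ (B ⨿ C) is an isomorphism). In the generalized cocore model structure, whose weak equivalences are W = {f : A ⟶ B | there exists some morphism B ⟶ A}, whose fibrations are Fib = (split monomorphisms).rlp, and whose cofibrations are Cof = (W ∩ Fib).llp, the pushout of a weak equivalence along a cofibration is a weak equivalence: given any pushout square with sides w : A ⟶ C in W and i : A ⟶ B in Cof, the induced morphism B ⟶ P opposite w lies in W (left properness). -/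
/-!
Let `r : C' ⟶ A` witness `w ∈ W`. The projection `B ⨯ B ⟶ B` lies in `W ∩ Fib` (the diagonal
is a section, and projections lift against split monomorphisms), so the cofibration `i` extends
`w ≫ r ≫ i` to some `e : B ⟶ B`. The maps `r ≫ i` and `e` then agree on `A`, and the pushout
gives `P ⟶ B`.
-/

open CategoryTheory CategoryTheory.Limits

universe v u

section

variable {C : Type u} [Category.{v} C]

lemma IsSplitMono.hasLiftingProperty_prod_snd {U V : C} (m : U ⟶ V) [IsSplitMono m]
    (X Y : C) [HasBinaryProduct X Y] : HasLiftingProperty m (prod.snd : X ⨯ Y ⟶ Y) where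
  sq_hasLift {u v} sq :=
    ⟨⟨{ l := prod.lift (retraction m ≫ u ≫ prod.fst) v
        fac_left := by
          ext
          · rw [Category.assoc, prod.lift_fst, IsSplitMono.id_assoc]
          · rw [Category.assoc, prod.lift_snd, sq.w]
        fac_right := prod.lift_snd _ _ }⟩⟩

lemma prod_snd_mem_rlp_isSplitMono (X Y : C) [HasBinaryProduct X Y] :
    MorphismPropertyRLP (fun _ _ f => IsSplitMono f) (prod.snd : X ⨯ Y ⟶ Y) :=
  fun _ _ m _ => IsSplitMono.hasLiftingProperty_prod_snd m X Y

lemma exists_extension_of_hasLiftingProperty_prod_snd {A B X : C} [HasBinaryProduct X B]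
    (i : A ⟶ B) [HasLiftingProperty i (prod.snd : X ⨯ B ⟶ B)] (g : A ⟶ X) :
    ∃ e : B ⟶ X, i ≫ e = g := by
  have sq : CommSq (prod.lift g i) i (prod.snd : X ⨯ B ⟶ B) (𝟙 B) :=
    ⟨by rw [prod.lift_snd, Category.comp_id]⟩
  exact ⟨sq.lift ≫ prod.fst, by rw [sq.fac_left_assoc, prod.lift_fst]⟩

end

/-- In a finitely bicomplete category with splitting and disjoint coproducts in
which binary products distribute over binary coproducts, the generalized cocore
model structure is left proper: the pushout of a weak equivalence along a
cofibration is a weak equivalence. -/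
theorem generalizedCocore_leftProper
    {C : Type u} [Category.{v} C] [HasFiniteLimits C] [HasFiniteColimits C]
    (hsplit : HasSplittingCoproducts C) [∀ A B : C, BinaryCoproductDisjoint A B]
    (hdist : ∀ A B C' : C,
      IsIso (coprod.desc (prod.map (𝟙 A) coprod.inl) (prod.map (𝟙 A) coprod.inr) :
        (A ⨯ B) ⨿ (A ⨯ C') ⟶ A ⨯ (B ⨿ C')))
    (W Fib Cof : MorphismProperty C)
    (hW : W = fun A B _ => Nonempty (B ⟶ A))
    (hFib : Fib = MorphismPropertyRLP (fun _ _ f => IsSplitMono f))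
    (hCof : Cof = MorphismPropertyLLP (fun _ _ f => W f ∧ Fib f)) :
    ∀ ⦃A B C' P : C⦄ (w : A ⟶ C') (i : A ⟶ B) (h : C' ⟶ P) (k : B ⟶ P),
      IsPushout w i h k → W w → Cof i → W k := by
  subst hW hFib hCof
  intro A B C' P w i h k hpo ⟨r⟩ hi
  have : HasLiftingProperty i (prod.snd : B ⨯ B ⟶ B) :=
    hi _ ⟨⟨diag B⟩, prod_snd_mem_rlp_isSplitMono B B⟩
  obtain ⟨e, he⟩ := exists_extension_of_hasLiftingProperty_prod_snd i (w ≫ r ≫ i)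
  exact ⟨hpo.desc (r ≫ i) e he.symm⟩
end

section
/- Let E be the preorder with two objects 0 < 1 viewed as a category (e.g. Fin 2 with its order) and let F : Type u ⥤ E be any functor (a cut of the category of sets). If F is not constant on objects, then for every type X one has F.obj X = 1 if and only if X is nonempty (equivalently, F.obj X = 0 if and only if X is empty). Hence the category of sets has exactly one non-trivial cut. -/
open CategoryTheory

universe u

/-!
A function `X → Y` gives `F.obj X ≤ F.obj Y`. Any two nonempty types map into each other, and so
do any two empty ones, so `F` only takes the values `F.obj PEmpty ≤ F.obj PUnit`. If `F` is not
constant these differ, which in `Fin 2` forces them to be `0` and `1`.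
-/

namespace CategoryTheory.Functor

variable {α : Type*} [PartialOrder α] (F : Type u ⥤ α)

theorem obj_le_obj_of_fun {X Y : Type u} (f : X → Y) : F.obj X ≤ F.obj Y :=
  leOfHom (F.map (TypeCat.ofHom f))

theorem obj_eq_obj_punit_of_nonempty (X : Type u) [Nonempty X] : F.obj X = F.obj PUnit :=
  le_antisymm (F.obj_le_obj_of_fun fun _ => PUnit.unit)
    (F.obj_le_obj_of_fun fun _ => Classical.arbitrary X)

theorem obj_eq_obj_pempty_of_isEmpty (X : Type u) [IsEmpty X] : F.obj X = F.obj PEmpty :=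
  le_antisymm (F.obj_le_obj_of_fun isEmptyElim) (F.obj_le_obj_of_fun PEmpty.elim)

theorem obj_eq_obj_of_obj_pempty_eq_obj_punit (h : F.obj PEmpty = F.obj PUnit) (X Y : Type u) :
    F.obj X = F.obj Y := by
  have key (Z : Type u) : F.obj Z = F.obj PUnit := by
    rcases isEmpty_or_nonempty Z with hZ | hZ
    · rw [F.obj_eq_obj_pempty_of_isEmpty Z, h]
    · exact F.obj_eq_obj_punit_of_nonempty Z
  rw [key X, key Y]

end CategoryTheory.Functor

/-- The category of sets has exactly one non-trivial cut: any functor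
`F : Type u ⥤ Fin 2` (where `Fin 2` carries its order category structure) which is
not constant on objects sends a type to `1` iff it is nonempty, and to `0` iff it
is empty. -/
theorem nontrivial_cut_of_types (F : Type u ⥤ Fin 2)
    (hF : ¬ ∀ X Y : Type u, F.obj X = F.obj Y) :
    ∀ X : Type u, (F.obj X = 1 ↔ Nonempty X) ∧ (F.obj X = 0 ↔ IsEmpty X) := by
  have hlt : F.obj PEmpty < F.obj PUnit :=
    lt_of_le_of_ne (F.obj_le_obj_of_fun PEmpty.elim)
      fun h => hF (F.obj_eq_obj_of_obj_pempty_eq_obj_punit h)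
  obtain ⟨h0, h1⟩ : F.obj PEmpty = 0 ∧ F.obj PUnit = 1 := by omega
  intro X
  rcases isEmpty_or_nonempty X with hX | hX
  · rw [F.obj_eq_obj_pempty_of_isEmpty X, h0]
    simp [hX]
  · rw [F.obj_eq_obj_punit_of_nonempty X, h1]
    simp [hX]
end
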